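/- For a monotone structure function φ on X = {1,...,n} with φ(∅)=0, φ(X)=1, the number of cut sets of φ of cardinality l equals C(n,l) · (s_1(φ) + ... + s_l(φ)), i.e., |{A ⊆ X : |A| = l, φ(X\A) = 0}| · (n-l)! · l! = N_1(φ) + ... + N_l(φ). -/

import Mathlib

/-!
Along an order σ of the components the tail sets {σ(i), …, σ(n)} decrease, so by monotonicity
φ is true on them up to the breakdown index and false afterwards. Hence σ has breakdown index at
most l exactly when φ vanishes on its last n - l components, i.e. when its first l components
form a cut set A. The orders with a given first-l set A are those mapping the last n - l
positions onto Aᶜ; they form a coset of the stabiliser of Aᶜ, of size l! (n - l)!.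
-/

open Finset

/-- The set {σ(i), σ(i+1), ..., σ(n)} (1-based indexing) of the last components
in the failure order σ. -/
def tailSet {n : ℕ} (σ : Equiv.Perm (Fin n)) (i : ℕ) : Finset (Fin n) :=
  (Finset.univ.filter (fun k : Fin n => i ≤ k.1 + 1)).image σ

/-- `Nperm n φ i` is the number of permutations of the n components whose
breakdown index is i. -/
def Nperm (n : ℕ) (φ : Finset (Fin n) → Bool) (i : ℕ) : ℕ :=
  (Finset.univ.filter (fun σ : Equiv.Perm (Fin n) =>
    φ (tailSet σ i) = true ∧ φ (tailSet σ (i + 1)) = false)).card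
open Equiv

section PermutationCounting

variable {α : Type*} [DecidableEq α]

theorem Finset.image_perm_eq_iff {s t : Finset α} {σ : Perm α} :
    s.image σ = t ↔ (· ∈ t) ∘ σ = (· ∈ s) := by
  simp only [Finset.ext_iff, funext_iff, Function.comp_apply, eq_iff_iff]
  rw [← σ.forall_congr_right]
  simp only [σ.injective.mem_finset_image, iff_comm]

variable [Fintype α]

theorem Finset.exists_perm_image_eq {s t : Finset α} (h : #s = #t) :
    ∃ σ : Perm α, s.image σ = t := by
  let e : {x // x ∈ s} ≃ {x // x ∈ t} := Fintype.equivOfCardEq (by simpa using h)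
  refine ⟨e.extendSubtype, eq_of_subset_of_card_le ?_ ?_⟩
  · intro y hy
    obtain ⟨x, hx, rfl⟩ := mem_image.1 hy
    exact extendSubtype_mem e x hx
  · rw [card_image_of_injective _ (Equiv.injective _), h]

theorem Finset.card_perm_stabilizer (t : Finset α) :
    Fintype.card {g : Perm α // (· ∈ t) ∘ g = (· ∈ t)} = (#t).factorial * (#tᶜ).factorial := by
  classical
  rw [DomMulAct.stabilizer_card]
  simp [Fintype.card_subtype, compl_eq_univ_sdiff, filter_notMem_eq_sdiff]

theorem Finset.card_filter_perm_image_eq {s t : Finset α} (h : #s = #t) :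
    #{σ : Perm α | s.image σ = t} = (#t).factorial * (#tᶜ).factorial := by
  obtain ⟨σ₀, hσ₀⟩ := exists_perm_image_eq h
  have key (σ : Perm α) : s.image σ = t ↔ (· ∈ t) ∘ ⇑(σ * σ₀⁻¹) = (· ∈ t) := by
    rw [image_perm_eq_iff, Perm.coe_mul, Perm.inv_def, ← Function.comp_assoc, comp_symm_eq,
      ← image_perm_eq_iff.1 hσ₀]
  rw [← Fintype.card_subtype, ← card_perm_stabilizer]
  exact Fintype.card_congr ((Equiv.mulRight σ₀⁻¹).subtypeEquiv key)

end PermutationCounting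

theorem sum_Icc_ite_eq_of_antitone {a : ℕ → Bool} (ha : Antitone a) (h1 : a 1 = true) (l : ℕ) :
    ∑ i ∈ Icc 1 l, (if a i = true ∧ a (i + 1) = false then 1 else 0) =
      if a (l + 1) = false then 1 else 0 := by
  induction l with
  | zero => simp [h1]
  | succ l ih =>
    rw [sum_Icc_succ_top (by omega), ih]
    have hle : a (l + 1 + 1) ≤ a (l + 1) := ha (Nat.le_succ _)
    revert hle
    cases a (l + 1) <;> cases a (l + 1 + 1) <;> decide

section TailSets

variable {n : ℕ}

theorem tailSet_antitone (σ : Perm (Fin n)) : Antitone (tailSet σ) := by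
  intro i j hij
  apply image_subset_image
  intro k
  simp only [mem_filter, mem_univ, true_and]
  omega

theorem tailSet_one (σ : Perm (Fin n)) : tailSet σ 1 = univ := by
  simp [tailSet]

theorem Fin.card_filter_le_val (n l : ℕ) : #{k : Fin n | l ≤ k.1} = n - l := by
  rw [← card_map Fin.valEmbedding, ← Nat.card_Ico l n]
  congr 1
  ext m
  simp only [mem_map, mem_filter, mem_univ, true_and, Fin.valEmbedding_apply, mem_Ico]
  constructor
  · rintro ⟨k, hk, rfl⟩
    exact ⟨hk, k.2⟩
  · rintro ⟨hl, hn⟩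
    exact ⟨⟨m, hn⟩, hl, rfl⟩

theorem tailSet_succ (σ : Perm (Fin n)) (l : ℕ) :
    tailSet σ (l + 1) = (univ.filter (fun k : Fin n => l ≤ k.1)).image σ := by
  simp [tailSet]

theorem card_tailSet_succ (σ : Perm (Fin n)) (l : ℕ) : #(tailSet σ (l + 1)) = n - l := by
  rw [tailSet_succ, card_image_of_injective _ σ.injective, Fin.card_filter_le_val]

end TailSets

section Signature

variable {n : ℕ} {φ : Finset (Fin n) → Bool}

theorem sum_Icc_Nperm_eq_card_filter (hφ : Monotone φ) (h1 : φ univ = true) (l : ℕ) :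
    ∑ i ∈ Icc 1 l, Nperm n φ i = #{σ : Perm (Fin n) | φ (tailSet σ (l + 1)) = false} := by
  simp only [Nperm, card_filter]
  rw [sum_comm]
  refine sum_congr rfl fun σ _ => sum_Icc_ite_eq_of_antitone ?_ ?_ l
  · exact hφ.comp_antitone (tailSet_antitone σ)
  · simp [tailSet_one, h1]

theorem card_filter_tailSet_eq_false {l : ℕ} (hl : l ≤ n) :
    #{σ : Perm (Fin n) | φ (tailSet σ (l + 1)) = false} =
      #{A : Finset (Fin n) | #A = l ∧ φ Aᶜ = false} * ((n - l).factorial * l.factorial) := by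
  rw [card_eq_sum_card_fiberwise (f := fun σ => (tailSet σ (l + 1))ᶜ)
    (t := {A : Finset (Fin n) | #A = l ∧ φ Aᶜ = false})]
  · refine sum_const_nat fun A hA => ?_
    obtain ⟨hAcard, hAcut⟩ := (mem_filter.1 hA).2
    have hfibre : ({σ ∈ {σ : Perm (Fin n) | φ (tailSet σ (l + 1)) = false} |
        (tailSet σ (l + 1))ᶜ = A} : Finset (Perm (Fin n))) =
          univ.filter (fun σ : Perm (Fin n) => (univ.filter (l ≤ ·.1)).image σ = Aᶜ) := by
      ext σ
      simp only [filter_filter, mem_filter, mem_univ, true_and, compl_eq_comm, @eq_comm _ Aᶜ,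
        ← tailSet_succ]
      constructor
      · exact And.right
      · intro h
        exact ⟨h ▸ hAcut, h⟩
    rw [hfibre, Finset.card_filter_perm_image_eq, card_compl, compl_compl, Fintype.card_fin, hAcard]
    rw [Fin.card_filter_le_val, card_compl, Fintype.card_fin, hAcard]
  · intro σ hσ
    simp only [coe_filter, mem_univ, true_and, Set.mem_ofPred_eq, card_compl, Fintype.card_fin,
      card_tailSet_succ, compl_compl] at hσ ⊢
    exact ⟨by omega, hσ⟩

end Signature

theorem card_cut_sets_eq_cumulative_signature_general {n : ℕ} (φ : Finset (Fin n) → Bool)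
    (hmono : ∀ A B : Finset (Fin n), A ⊆ B → φ A ≤ φ B)
    (h1 : φ Finset.univ = true) :
    ∀ l : ℕ, l ≤ n →
      (Finset.univ.filter (fun A : Finset (Fin n) => A.card = l ∧ φ Aᶜ = false)).card
          * Nat.factorial (n - l) * Nat.factorial l =
        ∑ i ∈ Finset.Icc 1 l, Nperm n φ i := by
  intro l hl
  rw [sum_Icc_Nperm_eq_card_filter (fun A B => hmono A B) h1, card_filter_tailSet_eq_false hl, mul_assoc]

/-- The number of cut sets of cardinality l, times (n-l)!·l!, equals
N_1(φ) + ... + N_l(φ); equivalently it is C(n,l)·(s_1+...+s_l)·n!/C(n,l)… i.e.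
the number of cut sets of cardinality l is C(n,l)·(s_1(φ)+...+s_l(φ)). -/
theorem card_cut_sets_eq_cumulative_signature {n : ℕ} (φ : Finset (Fin n) → Bool)
    (hmono : ∀ A B : Finset (Fin n), A ⊆ B → φ A ≤ φ B)
    (h0 : φ ∅ = false) (h1 : φ Finset.univ = true) :
    ∀ l : ℕ, l ≤ n →
      (Finset.univ.filter (fun A : Finset (Fin n) => A.card = l ∧ φ Aᶜ = false)).card
          * Nat.factorial (n - l) * Nat.factorial l =
        ∑ i ∈ Finset.Icc 1 l, Nperm n φ i :=
  card_cut_sets_eq_cumulative_signature_general φ hmono h1
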